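/- Let $w:\mathbb{R}\to(0,1)$ be the distribution function of a random variable $W$ satisfying $\mathbf{P}(W\le x) \sim C|x|e^{x}$ as $x\to -\infty$ for some $C>0$. Suppose $G_v$ is a family of distribution functions with the monotone sandwich property (McKean): for every $\varepsilon\in(0,1)$, writing $m_v(\varepsilon)$ for the $\varepsilon$-quantile of $G_v$ and $c_\varepsilon$ for the $\varepsilon$-quantile of $W$, one has $G_v(x + m_v(\varepsilon)) \le w(x + c_\varepsilon)$ for $x\le 0$, and $m_v(\varepsilon) = m_v + O(1)$ uniformly in $v$ for a reference centering $m_v$. Then there exists a constant $c>0$ such that for all $v>0$ and all $r\in\mathbb{R}$, $G_v(m_v + r) \le c\,(|r|+1)\,e^{r}$. -/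

import Mathlib

/-!
A single level, say `ε = 1/2`, suffices. The tail asymptotics together with `w ≤ 1` give
`w(x) ≤ A (|x| + 1) eˣ` on all of `ℝ`, and this profile changes by at most a constant factor under
a bounded shift. Since `m_v(1/2) - m_v` is bounded, the sandwich bounds `G_v(m_v + r)` by `w` at a
point within bounded distance of `r`; where the sandwich does not apply, `r` is bounded below and
`G_v ≤ 1` suffices.
-/

open Filter Set Asymptotics Real

noncomputable def tailBound (r : ℝ) : ℝ := (|r| + 1) * exp r

lemma tailBound_pos (r : ℝ) : 0 < tailBound r := by
  unfold tailBound; positivity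

lemma abs_mul_exp_le_tailBound (r : ℝ) : |r| * exp r ≤ tailBound r := by
  unfold tailBound; nlinarith [exp_pos r]

lemma one_le_exp_mul_tailBound {K r : ℝ} (h : -K ≤ r) : 1 ≤ exp K * tailBound r :=
  calc 1 ≤ exp K * exp r := by rw [← exp_add]; exact one_le_exp (by linarith)
    _ ≤ exp K * tailBound r := by
      unfold tailBound; gcongr; nlinarith [abs_nonneg r, exp_pos r]

lemma tailBound_add_le {L : ℝ} (r s : ℝ) (hs : |s| ≤ L) :
    tailBound (r + s) ≤ (1 + L) * exp L * tailBound r := by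
  have habs : |r + s| + 1 ≤ (1 + L) * (|r| + 1) := by
    nlinarith [abs_add_le r s, abs_nonneg r, abs_nonneg s]
  calc tailBound (r + s) = (|r + s| + 1) * exp s * exp r := by
        rw [tailBound, exp_add]; ring
    _ ≤ (1 + L) * (|r| + 1) * exp L * exp r := by
        have hL : 0 ≤ L := (abs_nonneg s).trans hs
        gcongr
        exact (le_abs_self s).trans hs
    _ = (1 + L) * exp L * tailBound r := by rw [tailBound]; ring

lemma isBigO_abs_mul_exp_of_tendsto_div {f : ℝ → ℝ} {C : ℝ} (hC : C ≠ 0)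
    (h : Tendsto (fun x => f x / (C * |x| * exp x)) atBot (nhds 1)) :
    f =O[atBot] fun x => |x| * exp x := by
  have hne : ∀ᶠ x in atBot, C * |x| * exp x ≠ 0 := by
    filter_upwards [eventually_lt_atBot 0] with x hx
    have : |x| ≠ 0 := abs_ne_zero.2 hx.ne
    positivity
  refine (isBigO_of_div_tendsto_nhds (hne.mono fun x hx h0 => absurd h0 hx) 1 h).trans ?_
  simpa only [mul_assoc] using isBigO_const_mul_self C (fun x => |x| * exp x) atBot

lemma exists_forall_le_mul_tailBound {f : ℝ → ℝ} (hf : ∀ x, f x ≤ 1)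
    (hO : f =O[atBot] fun x => |x| * exp x) : ∃ A, 0 < A ∧ ∀ x, f x ≤ A * tailBound x := by
  obtain ⟨B, hB⟩ := hO.bound
  obtain ⟨M, hM⟩ := eventually_atBot.1 hB
  refine ⟨max B (exp (-M)), lt_max_of_lt_right (exp_pos _), fun x => ?_⟩
  rcases le_or_gt x M with hx | hx
  · calc f x ≤ B * (|x| * exp x) := by
          simpa [abs_mul, abs_abs, abs_of_pos (exp_pos x)] using (le_abs_self _).trans (hM x hx)
      _ ≤ max B (exp (-M)) * (|x| * exp x) := by gcongr; exact le_max_left _ _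
      _ ≤ max B (exp (-M)) * tailBound x := by
          gcongr
          exact abs_mul_exp_le_tailBound x
  · calc f x ≤ 1 := hf x
      _ ≤ exp (-M) * tailBound x := one_le_exp_mul_tailBound (by linarith)
      _ ≤ max B (exp (-M)) * tailBound x :=
          mul_le_mul_of_nonneg_right (le_max_right _ _) (tailBound_pos x).le

theorem Gv_uniform_tail_bound_general
    (w : ℝ → ℝ) (G : ℝ → ℝ → ℝ) (m : ℝ → ℝ) (mq : ℝ → ℝ → ℝ) (cq : ℝ → ℝ)
    (C : ℝ) (hC : 0 < C)
    -- `w` takes values in `(0,1)` (it is a distribution function)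
    (hw01 : ∀ x, w x ∈ Set.Ioo 0 1)
    -- left-tail asymptotics of `w`: `w(x) ~ C|x|e^x` as `x → -∞`
    (htail : Tendsto (fun x => w x / (C * |x| * Real.exp x)) atBot (nhds 1))
    -- each `G v` is a distribution function with values in `[0,1]`, monotone
    (hG01 : ∀ v x, G v x ∈ Set.Icc 0 1)
    -- McKean's monotone sandwich property at each level `ε`
    (hsand : ∀ ε ∈ Set.Ioo (0 : ℝ) 1, ∀ v, 0 < v → ∀ x ≤ (0 : ℝ),
      G v (x + mq v ε) ≤ w (x + cq ε))
    -- the `ε`-quantiles are uniformly comparable to the reference centering `m_v`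
    (hO1 : ∀ ε ∈ Set.Ioo (0 : ℝ) 1, ∃ K : ℝ, ∀ v, 0 < v → |mq v ε - m v| ≤ K) :
    ∃ c : ℝ, 0 < c ∧ ∀ v, 0 < v → ∀ r : ℝ,
      G v (m v + r) ≤ c * (|r| + 1) * Real.exp r := by
  have hhalf : (1 / 2 : ℝ) ∈ Ioo 0 1 := ⟨by norm_num, by norm_num⟩
  obtain ⟨K, hK⟩ := hO1 _ hhalf
  have hK0 : 0 ≤ K := (abs_nonneg _).trans (hK 1 one_pos)
  obtain ⟨A, hA, hwA⟩ := exists_forall_le_mul_tailBound (fun x => (hw01 x).2.le)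
    (isBigO_abs_mul_exp_of_tendsto_div hC.ne' htail)
  set L := K + |cq (1 / 2)|
  refine ⟨A * ((1 + L) * exp L) + exp K, by positivity, fun v hv r => ?_⟩
  rw [mul_assoc, ← tailBound]
  rcases le_or_gt (m v + r - mq v (1 / 2)) 0 with hx | hx
  · have hshift : |m v - mq v (1 / 2) + cq (1 / 2)| ≤ L :=
      (abs_add_le _ _).trans (add_le_add_left (abs_sub_comm (mq v _) _ ▸ hK v hv) _)
    calc G v (m v + r) = G v (m v + r - mq v (1 / 2) + mq v (1 / 2)) := by ring_nf
      _ ≤ w (m v + r - mq v (1 / 2) + cq (1 / 2)) := hsand _ hhalf v hv _ hx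
      _ ≤ A * tailBound (r + (m v - mq v (1 / 2) + cq (1 / 2))) := by
          convert hwA _ using 3; ring
      _ ≤ A * ((1 + L) * exp L * tailBound r) := by gcongr; exact tailBound_add_le r _ hshift
      _ ≤ (A * ((1 + L) * exp L) + exp K) * tailBound r := by
          nlinarith [exp_pos K, tailBound_pos r]
  · calc G v (m v + r) ≤ 1 := (hG01 v _).2
      _ ≤ exp K * tailBound r :=
          one_le_exp_mul_tailBound (by linarith [(abs_le.1 (hK v hv)).1])
      _ ≤ (A * ((1 + L) * exp L) + exp K) * tailBound r :=
          mul_le_mul_of_nonneg_right (le_add_of_nonneg_left (by positivity)) (tailBound_pos r).le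

/-- Uniform tail bound for the travelling-wave family: if `w` is the distribution function
of `W` with `P(W ≤ x) ~ C|x|e^x` as `x → -∞`, and the family of distribution functions
`G_v` satisfies McKean's monotone sandwich property with uniformly comparable centerings,
then `G_v(m_v + r) ≤ c (|r|+1) e^r` for all `v > 0` and `r ∈ ℝ`. -/
theorem Gv_uniform_tail_bound
    (w : ℝ → ℝ) (G : ℝ → ℝ → ℝ) (m : ℝ → ℝ) (mq : ℝ → ℝ → ℝ) (cq : ℝ → ℝ)
    (C : ℝ) (hC : 0 < C)
    -- `w` takes values in `(0,1)` (it is a distribution function)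
    (hw01 : ∀ x, w x ∈ Set.Ioo 0 1)
    -- left-tail asymptotics of `w`: `w(x) ~ C|x|e^x` as `x → -∞`
    (htail : Tendsto (fun x => w x / (C * |x| * Real.exp x)) atBot (nhds 1))
    -- each `G v` is a distribution function with values in `[0,1]`, monotone
    (hG01 : ∀ v x, G v x ∈ Set.Icc 0 1)
    (hGmono : ∀ v, Monotone (G v))
    -- McKean's monotone sandwich property at each level `ε`
    (hsand : ∀ ε ∈ Set.Ioo (0 : ℝ) 1, ∀ v, 0 < v → ∀ x ≤ (0 : ℝ),
      G v (x + mq v ε) ≤ w (x + cq ε))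
    -- the `ε`-quantiles are uniformly comparable to the reference centering `m_v`
    (hO1 : ∀ ε ∈ Set.Ioo (0 : ℝ) 1, ∃ K : ℝ, ∀ v, 0 < v → |mq v ε - m v| ≤ K) :
    ∃ c : ℝ, 0 < c ∧ ∀ v, 0 < v → ∀ r : ℝ,
      G v (m v + r) ≤ c * (|r| + 1) * Real.exp r :=
  Gv_uniform_tail_bound_general w G m mq cq C hC hw01 htail hG01 hsand hO1
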